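/- Let $f : \mathbb{R} \to \mathbb{R}$ be smooth and let $n, a \in \mathbb{N}$. Then for all $x \in \mathbb{R}$, $\frac{d^a}{dx^a}\big[(x)_n f(x)\big] = \sum_{m=0}^{n} \sum_{u=0}^{m} \binom{n}{m}\, S_1(m,u)\, (x)_{n-m}\, (a)_u\, f^{(a-u)}(x)$, where $(x)_j = x(x-1)\cdots(x-j+1)$ is the falling factorial polynomial evaluated at $x$, and summands with $u > a$ vanish because $(a)_u = 0$ (so the derivative order $a-u$ may be read as truncated natural subtraction). -/

import Mathlib

/-- The falling factorial `(a)_m = a (a-1) ⋯ (a-m+1)`. -/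
noncomputable def fallingFactorial (a : ℝ) (m : ℕ) : ℝ :=
  ∏ i ∈ Finset.range m, (a - i)

/-- The signed Stirling numbers of the first kind `S₁(n,m)`: the coefficient of `xᵐ`
in the falling factorial polynomial `x (x-1) ⋯ (x-n+1)`. -/
noncomputable def stirlingFirst (n m : ℕ) : ℝ :=
  (descPochhammer ℝ n).coeff m

open Polynomial Finset


lemma fallingFactorial_zero (a : ℝ) : fallingFactorial a 0 = 1 := by
  simp [fallingFactorial]

lemma fallingFactorial_succ (a : ℝ) (m : ℕ) :
    fallingFactorial a (m + 1) = fallingFactorial a m * (a - m) := by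
  simp [fallingFactorial, Finset.prod_range_succ]

lemma descPochhammer_eval_eq (n : ℕ) (x : ℝ) :
    (descPochhammer ℝ n).eval x = fallingFactorial x n := by
  induction n with
  | zero => simp [fallingFactorial]
  | succ n ih =>
    rw [descPochhammer_succ_right, eval_mul, ih, fallingFactorial_succ]
    simp

lemma contDiff_polyEval (p : ℝ[X]) : ContDiff ℝ (⊤ : ℕ∞) (fun y : ℝ => p.eval y) := by
  induction p using Polynomial.induction_on' with
  | add p q hp hq => simpa [eval_add] using hp.add hq
  | monomial k c => simpa [eval_monomial] using contDiff_const.mul (contDiff_id.pow k)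

lemma iteratedDeriv_polyEval (k : ℕ) (p : ℝ[X]) (x : ℝ) :
    iteratedDeriv k (fun y : ℝ => p.eval y) x = (derivative^[k] p).eval x := by
  induction k generalizing p x with
  | zero => simp
  | succ k ih =>
    rw [iteratedDeriv_succ']
    have : deriv (fun y : ℝ => p.eval y) = fun y : ℝ => (derivative p).eval y := by
      funext y; exact Polynomial.deriv (p := p)
    rw [this, ih, Function.iterate_succ_apply]

lemma leibniz_iteratedDeriv (f g : ℝ → ℝ) (hf : ContDiff ℝ (⊤ : ℕ∞) f) (hg : ContDiff ℝ (⊤ : ℕ∞) g)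
    (a : ℕ) (x : ℝ) :
    iteratedDeriv a (fun y => f y * g y) x =
      ∑ u ∈ Finset.range (a + 1),
        (a.choose u : ℝ) * iteratedDeriv u f x * iteratedDeriv (a - u) g x := by
  induction a generalizing x with
  | zero => simp
  | succ a ih =>
    have hdf : ∀ m : ℕ, Differentiable ℝ (iteratedDeriv m f) := fun m =>
      hf.differentiable_iteratedDeriv m (by exact_mod_cast lt_top_iff_ne_top.2 (by simp))
    have hdg : ∀ m : ℕ, Differentiable ℝ (iteratedDeriv m g) := fun m =>
      hg.differentiable_iteratedDeriv m (by exact_mod_cast lt_top_iff_ne_top.2 (by simp))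
    rw [iteratedDeriv_succ]
    have hfun : iteratedDeriv a (fun y => f y * g y) =
        fun y => ∑ u ∈ Finset.range (a + 1),
          (a.choose u : ℝ) * iteratedDeriv u f y * iteratedDeriv (a - u) g y := funext ih
    rw [hfun]
    have hterm : ∀ u ∈ Finset.range (a + 1), DifferentiableAt ℝ
        (fun y => (a.choose u : ℝ) * iteratedDeriv u f y * iteratedDeriv (a - u) g y) x :=
      fun u _ => (((hdf u).const_mul _).mul (hdg (a - u))).differentiableAt
    rw [deriv_fun_sum hterm]
    have step : ∀ u ∈ Finset.range (a + 1),
        deriv (fun y => (a.choose u : ℝ) * iteratedDeriv u f y * iteratedDeriv (a - u) g y) x =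
        (a.choose u : ℝ) * iteratedDeriv (u + 1) f x * iteratedDeriv (a - u) g x
          + (a.choose u : ℝ) * iteratedDeriv u f x * iteratedDeriv (a - u + 1) g x := by
      intro u _
      rw [deriv_fun_mul (((hdf u).const_mul _).differentiableAt) ((hdg (a-u)).differentiableAt),
        deriv_const_mul _ ((hdf u).differentiableAt)]
      rw [← iteratedDeriv_succ, ← iteratedDeriv_succ]
      try ring
    rw [Finset.sum_congr rfl step, Finset.sum_add_distrib]
    have h2 : ∑ u ∈ Finset.range (a + 1),
        (a.choose u : ℝ) * iteratedDeriv u f x * iteratedDeriv (a - u + 1) g x =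
        ∑ u ∈ Finset.range (a + 1),
        (a.choose u : ℝ) * iteratedDeriv u f x * iteratedDeriv (a + 1 - u) g x :=
      Finset.sum_congr rfl fun u hu => by
        have := Finset.mem_range.1 hu
        congr 2
        omega
    have hA : ∑ u ∈ Finset.range (a + 1),
        (a.choose u : ℝ) * iteratedDeriv u f x * iteratedDeriv (a + 1 - u) g x =
        (∑ u ∈ Finset.range (a + 1),
          (a.choose (u+1) : ℝ) * iteratedDeriv (u+1) f x * iteratedDeriv (a - u) g x)
          + iteratedDeriv 0 f x * iteratedDeriv (a + 1) g x := by
      rw [Finset.sum_range_succ (f := fun u =>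
        (a.choose (u+1) : ℝ) * iteratedDeriv (u+1) f x * iteratedDeriv (a - u) g x),
        Nat.choose_succ_self]
      rw [Finset.sum_range_succ' (fun u =>
        (a.choose u : ℝ) * iteratedDeriv u f x * iteratedDeriv (a + 1 - u) g x)]
      simp only [Nat.cast_zero, zero_mul, add_zero, Nat.choose_zero_right, Nat.cast_one,
        one_mul, Nat.sub_zero]
      congr 1
      refine Finset.sum_congr rfl fun u hu => ?_
      congr 2
      omega
    have hR : ∑ u ∈ Finset.range (a + 2),
        (((a+1).choose u : ℕ) : ℝ) * iteratedDeriv u f x * iteratedDeriv (a + 1 - u) g x =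
        ((∑ u ∈ Finset.range (a + 1),
          (a.choose u : ℝ) * iteratedDeriv (u+1) f x * iteratedDeriv (a - u) g x)
         + ∑ u ∈ Finset.range (a + 1),
          (a.choose (u+1) : ℝ) * iteratedDeriv (u+1) f x * iteratedDeriv (a - u) g x)
          + iteratedDeriv 0 f x * iteratedDeriv (a + 1) g x := by
      rw [Finset.sum_range_succ' (fun u =>
        (((a+1).choose u : ℕ) : ℝ) * iteratedDeriv u f x * iteratedDeriv (a + 1 - u) g x),
        ← Finset.sum_add_distrib]
      congr 1
      · refine Finset.sum_congr rfl fun u hu => ?_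
        have h1 : a + 1 - (u + 1) = a - u := by omega
        rw [h1, Nat.choose_succ_succ]
        push_cast
        ring
      · simp
    rw [h2, hA, hR]
    ring

lemma vandermonde_fallingFactorial (n : ℕ) (x t : ℝ) :
    fallingFactorial (x + t) n = ∑ m ∈ Finset.range (n + 1),
      (n.choose m : ℝ) * fallingFactorial x (n - m) * fallingFactorial t m := by
  induction n with
  | zero => simp [fallingFactorial]
  | succ n ih =>
    rw [fallingFactorial_succ, ih, Finset.sum_mul]
    have step : ∀ m ∈ Finset.range (n + 1),
        (n.choose m : ℝ) * fallingFactorial x (n - m) * fallingFactorial t m * (x + t - n) =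
        (n.choose m : ℝ) * fallingFactorial x (n + 1 - m) * fallingFactorial t m
          + (n.choose m : ℝ) * fallingFactorial x (n - m) * fallingFactorial t (m + 1) := by
      intro m hm
      have hm' := Finset.mem_range.1 hm
      have e1 : n + 1 - m = (n - m) + 1 := by omega
      rw [e1, fallingFactorial_succ, fallingFactorial_succ]
      have e2 : ((n - m : ℕ) : ℝ) = (n : ℝ) - m := by
        push_cast [Nat.cast_sub (by omega : m ≤ n)]; ring
      rw [e2]
      ring
    rw [Finset.sum_congr rfl step, Finset.sum_add_distrib]
    have hA : ∑ m ∈ Finset.range (n + 1),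
        (n.choose m : ℝ) * fallingFactorial x (n + 1 - m) * fallingFactorial t m =
        (∑ m ∈ Finset.range (n + 1),
          (n.choose (m+1) : ℝ) * fallingFactorial x (n - m) * fallingFactorial t (m+1))
          + fallingFactorial x (n + 1) * fallingFactorial t 0 := by
      rw [Finset.sum_range_succ (f := fun m =>
        (n.choose (m+1) : ℝ) * fallingFactorial x (n - m) * fallingFactorial t (m+1)),
        Nat.choose_succ_self]
      rw [Finset.sum_range_succ' (fun m =>
        (n.choose m : ℝ) * fallingFactorial x (n + 1 - m) * fallingFactorial t m)]
      simp only [Nat.cast_zero, zero_mul, add_zero, Nat.choose_zero_right, Nat.cast_one,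
        one_mul, Nat.sub_zero]
      congr 1
      refine Finset.sum_congr rfl fun m hm => ?_
      congr 3
      omega
    have hR : ∑ m ∈ Finset.range (n + 2),
        (((n+1).choose m : ℕ) : ℝ) * fallingFactorial x (n + 1 - m) * fallingFactorial t m =
        ((∑ m ∈ Finset.range (n + 1),
          (n.choose m : ℝ) * fallingFactorial x (n - m) * fallingFactorial t (m+1))
         + ∑ m ∈ Finset.range (n + 1),
          (n.choose (m+1) : ℝ) * fallingFactorial x (n - m) * fallingFactorial t (m+1))
          + fallingFactorial x (n + 1) * fallingFactorial t 0 := by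
      rw [Finset.sum_range_succ' (fun m =>
        (((n+1).choose m : ℕ) : ℝ) * fallingFactorial x (n + 1 - m) * fallingFactorial t m),
        ← Finset.sum_add_distrib]
      congr 1
      · refine Finset.sum_congr rfl fun m hm => ?_
        have e1 : n + 1 - (m + 1) = n - m := by omega
        rw [e1, Nat.choose_succ_succ]
        push_cast
        ring
      · simp [fallingFactorial_zero]
    rw [hA, hR]
    ring

lemma taylor_descPochhammer (n : ℕ) (x : ℝ) :
    Polynomial.taylor x (descPochhammer ℝ n) = ∑ m ∈ Finset.range (n + 1),
      Polynomial.C ((n.choose m : ℝ) * fallingFactorial x (n - m)) * descPochhammer ℝ m := by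
  apply Polynomial.funext
  intro t
  rw [Polynomial.taylor_apply, Polynomial.eval_comp]
  simp only [Polynomial.eval_finset_sum, Polynomial.eval_mul, Polynomial.eval_C,
    Polynomial.eval_add, Polynomial.eval_X]
  rw [descPochhammer_eval_eq, add_comm t x, vandermonde_fallingFactorial]
  exact Finset.sum_congr rfl fun m _ => by rw [descPochhammer_eval_eq]


lemma iteratedDeriv_fallingFactorial (n u : ℕ) (x : ℝ) :
    iteratedDeriv u (fun y => fallingFactorial y n) x =
      ((Nat.factorial u : ℕ) : ℝ) * ∑ m ∈ Finset.range (n + 1),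
        (n.choose m : ℝ) * fallingFactorial x (n - m) * stirlingFirst m u := by
  have hfn : (fun y : ℝ => fallingFactorial y n) = fun y => (descPochhammer ℝ n).eval y := by
    funext y; rw [descPochhammer_eval_eq]
  rw [hfn, iteratedDeriv_polyEval]
  have hd : derivative^[u] (descPochhammer ℝ n) =
      Nat.factorial u • Polynomial.hasseDeriv u (descPochhammer ℝ n) := by
    rw [← Polynomial.factorial_smul_hasseDeriv]; rfl
  rw [hd]
  rw [Polynomial.eval_smul, nsmul_eq_mul]
  rw [← Polynomial.taylor_coeff, taylor_descPochhammer, Polynomial.finset_sum_coeff]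
  simp only [Polynomial.coeff_C_mul, Finset.mul_sum]
  refine Finset.sum_congr rfl fun m _ => ?_
  simp only [stirlingFirst]
  try push_cast
  try ring

lemma fallingFactorial_nat (a u : ℕ) :
    fallingFactorial (a : ℝ) u = (a.choose u : ℝ) * ((Nat.factorial u : ℕ) : ℝ) := by
  rw [← descPochhammer_eval_eq, descPochhammer_eval_eq_descFactorial,
    Nat.descFactorial_eq_factorial_mul_choose]
  push_cast
  ring

lemma stirlingFirst_eq_zero_of_lt {m u : ℕ} (h : m < u) : stirlingFirst m u = 0 := by
  apply Polynomial.coeff_eq_zero_of_natDegree_lt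
  rwa [descPochhammer_natDegree]

/-- Integer-order case of the paper's Theorem 4.3: truncated Leibniz rule for the
product of the falling factorial `(x)_n` and a smooth function. -/
theorem truncated_leibniz_fallingFactorial (f : ℝ → ℝ) (hf : ContDiff ℝ (⊤ : ℕ∞) f)
    (n a : ℕ) (x : ℝ) :
    iteratedDeriv a (fun y => fallingFactorial y n * f y) x =
      ∑ m ∈ Finset.range (n + 1), ∑ u ∈ Finset.range (m + 1),
        (n.choose m : ℝ) * stirlingFirst m u * fallingFactorial x (n - m) *
          fallingFactorial (a : ℝ) u * iteratedDeriv (a - u) f x := by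
  have hpoly : ContDiff ℝ (⊤ : ℕ∞) (fun y : ℝ => fallingFactorial y n) := by
    have : (fun y : ℝ => fallingFactorial y n) = fun y => (descPochhammer ℝ n).eval y := by
      funext y; rw [descPochhammer_eval_eq]
    rw [this]; exact contDiff_polyEval _
  rw [leibniz_iteratedDeriv _ _ hpoly hf]
  -- LHS: ∑_{u ≤ a} C(a,u) * D^u poly * D^(a-u) f
  -- rewrite D^u poly, and C(a,u) * u! = (a)_u
  have lhs_eq : ∑ u ∈ Finset.range (a + 1),
      (a.choose u : ℝ) * iteratedDeriv u (fun y => fallingFactorial y n) x *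
        iteratedDeriv (a - u) f x =
      ∑ u ∈ Finset.range (a + 1), ∑ m ∈ Finset.range (n + 1),
        (n.choose m : ℝ) * stirlingFirst m u * fallingFactorial x (n - m) *
          fallingFactorial (a : ℝ) u * iteratedDeriv (a - u) f x := by
    refine Finset.sum_congr rfl fun u _ => ?_
    rw [iteratedDeriv_fallingFactorial, fallingFactorial_nat]
    simp only [Finset.mul_sum, Finset.sum_mul]
    refine Finset.sum_congr rfl fun m _ => ?_
    ring
  rw [lhs_eq]
  -- swap order of summation and fix ranges using vanishing terms
  rw [Finset.sum_comm]
  refine Finset.sum_congr rfl fun m hm => ?_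
  -- now: ∑_{u ∈ range (a+1)} T u = ∑_{u ∈ range (m+1)} T u, where T u = 0 unless u ≤ m and u ≤ a
  have hT0 : ∀ u, m < u → (n.choose m : ℝ) * stirlingFirst m u * fallingFactorial x (n - m) *
      fallingFactorial (a : ℝ) u * iteratedDeriv (a - u) f x = 0 := by
    intro u hu
    rw [stirlingFirst_eq_zero_of_lt hu]; ring
  have hT0' : ∀ u, a < u → (n.choose m : ℝ) * stirlingFirst m u * fallingFactorial x (n - m) *
      fallingFactorial (a : ℝ) u * iteratedDeriv (a - u) f x = 0 := by
    intro u hu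
    rw [fallingFactorial_nat, Nat.choose_eq_zero_of_lt hu]; push_cast; ring
  rcases le_or_gt (m + 1) (a + 1) with h | h
  · rw [← Finset.sum_range_add_sum_Ico _ h]
    have : ∑ u ∈ Finset.Ico (m + 1) (a + 1), (n.choose m : ℝ) * stirlingFirst m u *
        fallingFactorial x (n - m) * fallingFactorial (a : ℝ) u * iteratedDeriv (a - u) f x = 0 :=
      Finset.sum_eq_zero fun u hu => hT0 u (by have := (Finset.mem_Ico.1 hu).1; omega)
    rw [this, add_zero]
  · rw [← Finset.sum_range_add_sum_Ico _ h.le]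
    have : ∑ u ∈ Finset.Ico (a + 1) (m + 1), (n.choose m : ℝ) * stirlingFirst m u *
        fallingFactorial x (n - m) * fallingFactorial (a : ℝ) u * iteratedDeriv (a - u) f x = 0 :=
      Finset.sum_eq_zero fun u hu => hT0' u (by have := (Finset.mem_Ico.1 hu).1; omega)
    rw [this, add_zero]
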